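/- arXiv:1904.08595 — 2 statements merged into one kernel-verified Lean document; each statement's English description precedes it below -/
import Mathlib

section
/- Let f, g : ℝ → ℝ be C¹ functions with g > 0, let a ∈ ℝ, and set α(t) = f(t)/g(t) and h(r) = (∫ₐʳ f(t) dt)/(∫ₐʳ g(t) dt) for r > a. Then h is differentiable on (a,∞) and h'(r) = g(r) · (∫ₐʳ (∫ₐᵘ g(t) dt) · α'(u) du) / (∫ₐʳ g(t) dt)². -/
/-!
Write `F, G` for the primitives of `f, g` vanishing at `a` and `α = f / g`. The quotient rule
gives `h' = (f G - F g) / G²`, and since `f = g α` the numerator is `g (G α - F)`. Integrating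
`G α'` by parts (with `G' = g`, `G a = 0`) gives exactly `G(r) α(r) - F(r)`.
-/

open intervalIntegral

theorem integral_primitive_mul_deriv {g φ : ℝ → ℝ} (hg : Continuous g) (hφ : ContDiff ℝ 1 φ)
    (a r : ℝ) :
    ∫ u in a..r, (∫ t in a..u, g t) * deriv φ u =
      (∫ t in a..r, g t) * φ r - ∫ u in a..r, g u * φ u := by
  have hφ' : ∀ x, HasDerivAt φ (deriv φ x) x := fun x =>
    ((hφ.differentiable one_ne_zero) x).hasDerivAt
  rw [integral_mul_deriv_eq_deriv_mul (fun x _ => (hg.integral_hasStrictDerivAt a x).hasDerivAt)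
    (fun x _ => hφ' x) (hg.intervalIntegrable a r)
    ((hφ.continuous_deriv le_rfl).intervalIntegrable a r), integral_same, zero_mul, sub_zero]

theorem integral_primitive_mul_deriv_div {f g : ℝ → ℝ} (hg : Continuous g)
    (hg₀ : ∀ t, g t ≠ 0) (hfg : ContDiff ℝ 1 (fun t => f t / g t)) (a r : ℝ) :
    ∫ u in a..r, (∫ t in a..u, g t) * deriv (fun t => f t / g t) u =
      (∫ t in a..r, g t) * (f r / g r) - ∫ u in a..r, f u := by
  rw [integral_primitive_mul_deriv hg hfg]
  congr 1
  exact integral_congr fun u _ => mul_div_cancel₀ (f u) (hg₀ u)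

theorem hasDerivAt_primitive_div_primitive {f g : ℝ → ℝ} (hf : Continuous f) (hg : Continuous g)
    (a : ℝ) {r : ℝ} (hG : ∫ t in a..r, g t ≠ 0) :
    HasDerivAt (fun ρ => (∫ t in a..ρ, f t) / (∫ t in a..ρ, g t))
      ((f r * (∫ t in a..r, g t) - (∫ t in a..r, f t) * g r) / (∫ t in a..r, g t) ^ 2) r :=
  (hf.integral_hasStrictDerivAt a r).hasDerivAt.div (hg.integral_hasStrictDerivAt a r).hasDerivAt hG

/-- Quantitative ratio derivative: for `C¹` functions `f, g` with `g > 0`, the quotient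
`h(r) = (∫ₐʳ f)/(∫ₐʳ g)` satisfies
`h'(r) = g(r)·(∫ₐʳ (∫ₐᵘ g) α'(u) du)/(∫ₐʳ g)²` with `α = f/g`. -/
theorem integral_ratio_hasDerivAt
    (f g : ℝ → ℝ) (hf : ContDiff ℝ 1 f) (hg : ContDiff ℝ 1 g)
    (hgpos : ∀ t, 0 < g t) (a : ℝ) :
    ∀ r, a < r →
      HasDerivAt (fun ρ => (∫ t in a..ρ, f t) / (∫ t in a..ρ, g t))
        (g r * (∫ u in a..r, (∫ t in a..u, g t) * deriv (fun t => f t / g t) u) /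
          (∫ t in a..r, g t) ^ 2) r := by
  intro r hr
  have hg₀ : ∀ t, g t ≠ 0 := fun t => (hgpos t).ne'
  have hG : 0 < ∫ t in a..r, g t :=
    intervalIntegral_pos_of_pos (hg.continuous.intervalIntegrable a r) hgpos hr
  refine (hasDerivAt_primitive_div_primitive hf.continuous hg.continuous a hG.ne').congr_deriv ?_
  rw [integral_primitive_mul_deriv_div hg.continuous hg₀ (hf.div hg hg₀)]
  field_simp [hg₀ r]
end

section
/- Let k : ℝ → ℝ be continuous, let s_k solve s_k''=-k·s_k, s_k(0)=0, s_k'(0)=1, and suppose s_k > 0 on (0, r]. Let ct_k = c_k/s_k where c_k solves the same ODE with c_k(0)=1, c_k'(0)=0, and let R : [0,r] → ℝ be continuous. Then ∫₀ʳ ∫₀^ρ (s_k(t)/s_k(ρ)²) · R(t) dt dρ = ∫₀ʳ (ct_k(t) - ct_k(r)) · s_k(t) · R(t) dt, provided both sides are finite. -/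
open intervalIntegral Set Filter Topology

/-!
With `F ρ = ∫₀^ρ s R` the inner integral is `F ρ / s(ρ)²`. The Wronskian `c' s - c s'` is
constant, equal to `-1`, so `(c / s)' = -1 / s²` and `H x = ∫₀ˣ c R - (c x / s x) F x` has
derivative `F / s²` on `(0, r)` (the terms `c R` and `(c / s) s R` cancel). As `F x = o(x)` and
`s x ~ x`, `H` is continuous at `0` with `H 0 = 0`, so the double integral is `H r`, which is
the right-hand side.
-/

theorem wronskian_eq_of_hasDerivAt {k s s' c c' : ℝ → ℝ}
    (hs : ∀ t, HasDerivAt s (s' t) t) (hs' : ∀ t, HasDerivAt s' (-(k t) * s t) t)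
    (hc : ∀ t, HasDerivAt c (c' t) t) (hc' : ∀ t, HasDerivAt c' (-(k t) * c t) t) (t u : ℝ) :
    c' t * s t - c t * s' t = c' u * s u - c u * s' u := by
  have hW : ∀ t, HasDerivAt (fun t => c' t * s t - c t * s' t) 0 t := fun t =>
    (((hc' t).mul (hs t)).sub ((hc t).mul (hs' t))).congr_deriv (by ring)
  exact is_const_of_deriv_eq_zero (fun t => (hW t).differentiableAt) (fun t => (hW t).deriv) t u

theorem hasDerivAt_div_of_wronskian_eq_neg_one {s c : ℝ → ℝ} {s' c' x : ℝ}
    (hs : HasDerivAt s s' x) (hc : HasDerivAt c c' x) (hsx : s x ≠ 0)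
    (hW : c' * s x - c x * s' = -1) :
    HasDerivAt (fun y => c y / s y) (-(s x ^ 2)⁻¹) x :=
  (hc.div hs hsx).congr_deriv (by rw [hW]; field_simp)

theorem HasDerivWithinAt.tendsto_div_of_eq_zero {f g : ℝ → ℝ} {f' g' a : ℝ} {S : Set ℝ}
    (hf : HasDerivWithinAt f f' S a) (hg : HasDerivWithinAt g g' S a) (hg' : g' ≠ 0)
    (hfa : f a = 0) (hga : g a = 0) :
    Tendsto (fun x => f x / g x) (𝓝[S \ {a}] a) (𝓝 (f' / g')) := by
  refine ((hasDerivWithinAt_iff_tendsto_slope.mp hf).div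
    (hasDerivWithinAt_iff_tendsto_slope.mp hg) hg').congr' ?_
  filter_upwards [self_mem_nhdsWithin] with x hx
  have hxa : x - a ≠ 0 := sub_ne_zero.mpr hx.2
  simp only [slope_fun_def_field, hfa, hga, sub_zero]
  exact div_div_div_cancel_right₀ hxa _ _

theorem hasDerivWithinAt_integral_of_continuousOn_Icc {E : Type*} [NormedAddCommGroup E]
    [NormedSpace ℝ E] [CompleteSpace E] {f : ℝ → E} {a b x : ℝ}
    (hf : ContinuousOn f (Icc a b)) (hx : x ∈ Icc a b) :
    HasDerivWithinAt (fun u => ∫ t in a..u, f t) (f x) (Icc a b) x := by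
  have := Fact.mk hx
  exact integral_hasDerivWithinAt_right
    ((hf.mono (Icc_subset_Icc_right hx.2)).intervalIntegrable_of_Icc hx.1)
    (hf.stronglyMeasurableAtFilter_nhdsWithin measurableSet_Icc x) (hf x hx)

theorem continuousOn_div_mul_integral {s c f : ℝ → ℝ} {s' a b : ℝ}
    (hs : ContinuousOn s (Icc a b)) (hs' : HasDerivWithinAt s s' (Icc a b) a) (hs'0 : s' ≠ 0)
    (hsa : s a = 0) (hs_ne : ∀ x ∈ Ioc a b, s x ≠ 0) (hc : ContinuousOn c (Icc a b))
    (hf : ContinuousOn f (Icc a b)) (hfa : f a = 0) :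
    ContinuousOn (fun x => c x / s x * ∫ t in a..x, f t) (Icc a b) := by
  intro x hx
  have hF := hasDerivWithinAt_integral_of_continuousOn_Icc hf hx
  rcases hx.1.eq_or_lt with hax | hax
  · subst hax
    -- at `a` the function takes the junk value `c a / 0 * 0 = 0`, which is the limit from the right
    have hquot := hF.tendsto_div_of_eq_zero hs' hs'0 integral_same hsa
    rw [hfa, zero_div] at hquot
    rw [← continuousWithinAt_sdiff_self, ContinuousWithinAt]
    simp only [hsa, div_zero, zero_mul]
    have hprod := ((hc a hx).mono sdiff_subset).tendsto.mul hquot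
    rw [mul_zero] at hprod
    exact hprod.congr fun y => by ring
  · exact ((hc x hx).div (hs x hx) (hs_ne x ⟨hax, hx.2⟩)).mul hF.continuousWithinAt

theorem hasDerivAt_integral_sub_div_mul_integral {s c R : ℝ → ℝ} {s' c' a b x : ℝ}
    (hs : HasDerivAt s s' x) (hc : HasDerivAt c c' x) (hsx : s x ≠ 0)
    (hW : c' * s x - c x * s' = -1) (hsR : ContinuousOn (fun t => s t * R t) (Icc a b))
    (hcR : ContinuousOn (fun t => c t * R t) (Icc a b)) (hx : x ∈ Ioo a b) :
    HasDerivAt (fun u => (∫ t in a..u, c t * R t) - c u / s u * ∫ t in a..u, s t * R t)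
      ((∫ t in a..x, s t * R t) / s x ^ 2) x := by
  have hIcc : Icc a b ∈ 𝓝 x := Icc_mem_nhds hx.1 hx.2
  have hP := (hasDerivWithinAt_integral_of_continuousOn_Icc hcR (Ioo_subset_Icc_self hx)).hasDerivAt
    hIcc
  have hF := (hasDerivWithinAt_integral_of_continuousOn_Icc hsR (Ioo_subset_Icc_self hx)).hasDerivAt
    hIcc
  exact (hP.sub ((hasDerivAt_div_of_wronskian_eq_neg_one hs hc hsx hW).mul hF)).congr_deriv
    (by field_simp; ring)

theorem integral_div_sub_const_mul_mul {s c R : ℝ → ℝ} {a b : ℝ} (hab : a ≤ b)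
    (hs : ∀ t ∈ Ioc a b, s t ≠ 0) (hsR : ContinuousOn (fun t => s t * R t) (Icc a b))
    (hcR : ContinuousOn (fun t => c t * R t) (Icc a b)) (K : ℝ) :
    ∫ t in a..b, (c t / s t - K) * s t * R t =
      (∫ t in a..b, c t * R t) - K * ∫ t in a..b, s t * R t := by
  rw [← integral_const_mul, ← integral_sub (hcR.intervalIntegrable_of_Icc hab)
    ((hsR.intervalIntegrable_of_Icc hab).const_mul _)]
  refine integral_congr_ae (MeasureTheory.ae_of_all _ fun t ht => ?_)
  rw [uIoc_of_le hab] at ht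
  field_simp [hs t ht]

theorem double_integral_reduction_general
    (k s s' c c' : ℝ → ℝ)
    (hs : ∀ t, HasDerivAt s (s' t) t)
    (hs' : ∀ t, HasDerivAt s' (-(k t) * s t) t)
    (hs0 : s 0 = 0) (hs'0 : s' 0 = 1)
    (hc : ∀ t, HasDerivAt c (c' t) t)
    (hc' : ∀ t, HasDerivAt c' (-(k t) * c t) t)
    (hc0 : c 0 = 1) (hc'0 : c' 0 = 0)
    (r : ℝ) (hr : 0 < r) (hspos : ∀ t ∈ Set.Ioc 0 r, 0 < s t)
    (R : ℝ → ℝ) (hR : ContinuousOn R (Set.Icc 0 r))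
    (hInt : IntervalIntegrable
      (fun ρ => ∫ t in (0:ℝ)..ρ, (s t / (s ρ) ^ 2) * R t) MeasureTheory.volume 0 r) :
    ∫ ρ in (0:ℝ)..r, ∫ t in (0:ℝ)..ρ, (s t / (s ρ) ^ 2) * R t =
      ∫ t in (0:ℝ)..r, (c t / s t - c r / s r) * s t * R t := by
  have hW : ∀ t, c' t * s t - c t * s' t = -1 := fun t => by
    simpa [hs0, hs'0, hc0, hc'0] using wronskian_eq_of_hasDerivAt hs hs' hc hc' t 0
  have hs_ne : ∀ t ∈ Ioc 0 r, s t ≠ 0 := fun t ht => (hspos t ht).ne'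
  have hs_cont : Continuous s := continuous_iff_continuousAt.mpr fun t => (hs t).continuousAt
  have hc_cont : Continuous c := continuous_iff_continuousAt.mpr fun t => (hc t).continuousAt
  have hsR : ContinuousOn (fun t => s t * R t) (Icc 0 r) := hs_cont.continuousOn.mul hR
  have hcR : ContinuousOn (fun t => c t * R t) (Icc 0 r) := hc_cont.continuousOn.mul hR
  have hinner : ∀ ρ, ∫ t in (0:ℝ)..ρ, s t / s ρ ^ 2 * R t =
      (∫ t in (0:ℝ)..ρ, s t * R t) / s ρ ^ 2 := fun ρ => by
    rw [← integral_div]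
    exact integral_congr fun t _ => by ring
  have hP_cont : ContinuousOn (fun x => ∫ t in (0:ℝ)..x, c t * R t) (Icc 0 r) := fun x hx =>
    (hasDerivWithinAt_integral_of_continuousOn_Icc hcR hx).continuousWithinAt
  have hH_cont := hP_cont.sub (continuousOn_div_mul_integral hs_cont.continuousOn
    (hs 0).hasDerivWithinAt (by simp [hs'0]) hs0 hs_ne hc_cont.continuousOn hsR (by simp [hs0]))
  have hH_deriv : ∀ x ∈ Ioo 0 r, HasDerivAt
      (fun u => (∫ t in (0:ℝ)..u, c t * R t) - c u / s u * ∫ t in (0:ℝ)..u, s t * R t)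
      (∫ t in (0:ℝ)..x, s t / s x ^ 2 * R t) x := fun x hx => hinner x ▸
    hasDerivAt_integral_sub_div_mul_integral (hs x) (hc x) (hs_ne x (Ioo_subset_Ioc_self hx))
      (hW x) hsR hcR hx
  rw [integral_eq_sub_of_hasDerivAt_of_le hr.le hH_cont hH_deriv hInt,
    integral_div_sub_const_mul_mul hr.le hs_ne hsR hcR]
  simp [hs0]

/-- Fubini reduction of the double integral in the quantitative Laplacian estimate:
`∫₀ʳ ∫₀^ρ (s_k(t)/s_k(ρ)²) R(t) dt dρ = ∫₀ʳ (ct_k(t) - ct_k(r)) s_k(t) R(t) dt`,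
where `ct_k = c_k/s_k`. -/
theorem double_integral_reduction
    (k s s' c c' : ℝ → ℝ) (hk : Continuous k)
    (hs : ∀ t, HasDerivAt s (s' t) t)
    (hs' : ∀ t, HasDerivAt s' (-(k t) * s t) t)
    (hs0 : s 0 = 0) (hs'0 : s' 0 = 1)
    (hc : ∀ t, HasDerivAt c (c' t) t)
    (hc' : ∀ t, HasDerivAt c' (-(k t) * c t) t)
    (hc0 : c 0 = 1) (hc'0 : c' 0 = 0)
    (r : ℝ) (hr : 0 < r) (hspos : ∀ t ∈ Set.Ioc 0 r, 0 < s t)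
    (R : ℝ → ℝ) (hR : ContinuousOn R (Set.Icc 0 r))
    (hInt : IntervalIntegrable
      (fun ρ => ∫ t in (0:ℝ)..ρ, (s t / (s ρ) ^ 2) * R t) MeasureTheory.volume 0 r)
    (hInt' : IntervalIntegrable
      (fun t => (c t / s t - c r / s r) * s t * R t) MeasureTheory.volume 0 r) :
    ∫ ρ in (0:ℝ)..r, ∫ t in (0:ℝ)..ρ, (s t / (s ρ) ^ 2) * R t =
      ∫ t in (0:ℝ)..r, (c t / s t - c r / s r) * s t * R t :=
  double_integral_reduction_general k s s' c c' hs hs' hs0 hs'0 hc hc' hc0 hc'0 r hr hspos R hR hInt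
end
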